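/- Let p be an odd prime and d ≥ 1, and set r = (p−1)/2. If there is no ℤ/p-equivariant continuous map from X_{d,p} = (Sᵈ)ᵖ ∖ L to the unit sphere S((Δʳ)^⊥) of the orthogonal complement of Δʳ in (ℝᵖ)ʳ, then the pair (d, p) is admissible: for every continuous injective map f : Sᵈ → ℝ^{d+1} and every choice of metrics ρ₁, …, ρ_{(p−1)/2} on ℝ^{d+1}, each inducing the standard Euclidean topology, there exist p distinct points x₀, …, x_{p−1} ∈ Sᵈ, indexed by 𝔽_p, such that for every j = 1, …, (p−1)/2 the values ρⱼ(f(x_{kj}), f(x_{(k+1)j})) are equal for all k ∈ 𝔽_p. -/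

import Mathlib

/-- `ρ` is a metric on `E` that induces the (given) standard topology of `E`. -/
def IsMetricEquivToStd {E : Type*} [TopologicalSpace E] (ρ : E → E → ℝ) : Prop :=
  (∀ x y, ρ x y = ρ y x) ∧
  (∀ x y, ρ x y = 0 ↔ x = y) ∧
  (∀ x y z, ρ x z ≤ ρ x y + ρ y z) ∧
  (∀ s : Set E, IsOpen s ↔ ∀ x ∈ s, ∃ ε > 0, {y | ρ x y < ε} ⊆ s)

/-- The cyclic-shift action of the generator of `ℤ/p` on
`X_{d,p} = (Sᵈ)ᵖ ∖ L`, the `p`-fold product of the sphere minus the thin diagonal. -/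
def deletedProductShift {p : ℕ} {E : Type*}
    (x : {f : ZMod p → E // ∃ k k', f k ≠ f k'}) :
    {f : ZMod p → E // ∃ k k', f k ≠ f k'} :=
  ⟨fun k => x.1 (k + 1), by
    obtain ⟨k, k', h⟩ := x.2
    exact ⟨k - 1, k' - 1, by simpa using h⟩⟩

lemma metric_nonneg' {E : Type*} [TopologicalSpace E] {ρ : E → E → ℝ}
    (h : IsMetricEquivToStd ρ) (x y : E) : 0 ≤ ρ x y := by
  obtain ⟨hsymm, hzero, htri, -⟩ := h
  have h1 : ρ x x = 0 := (hzero x x).2 rfl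
  have h2 := htri x y x
  have h3 := hsymm x y
  linarith

lemma metric_continuous' {E : Type*} [TopologicalSpace E] {ρ : E → E → ℝ}
    (h : IsMetricEquivToStd ρ) : Continuous (fun q : E × E => ρ q.1 q.2) := by
  obtain ⟨hsymm, hzero, htri, hopen⟩ := h
  rw [continuous_iff_continuousAt]
  rintro ⟨a, b⟩
  rw [ContinuousAt, Metric.tendsto_nhds]
  intro ε hε
  have hball : ∀ c : E, IsOpen {y | ρ c y < ε/2} := by
    intro c
    rw [hopen]
    intro x hx
    refine ⟨ε/2 - ρ c x, by simpa using hx, fun y hy => ?_⟩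
    have := htri c x y
    simp only [Set.mem_setOf_eq] at *
    linarith
  have hU : {y | ρ a y < ε/2} ∈ nhds a :=
    (hball a).mem_nhds (by simp [(hzero a a).2 rfl]; positivity)
  have hV : {y | ρ b y < ε/2} ∈ nhds b :=
    (hball b).mem_nhds (by simp [(hzero b b).2 rfl]; positivity)
  rw [nhds_prod_eq]
  filter_upwards [Filter.prod_mem_prod hU hV] with q hq
  obtain ⟨h1, h2⟩ := hq
  simp only [Set.mem_setOf_eq] at h1 h2
  rw [Real.dist_eq, abs_lt]
  have t1 := htri q.1 a q.2
  have t2 := htri a b q.2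
  have t3 := htri a q.1 b
  have t4 := htri q.1 q.2 b
  have s1 := hsymm q.1 a
  have s2 := hsymm q.2 b
  have s3 := hsymm q.1 b
  constructor <;> linarith


/-- Proposition: with `r = (p-1)/2`, if there is no `ℤ/p`-equivariant continuous map
`X_{d,p} → S((Δʳ)^⊥)`, then the pair `(d, p)` is admissible. -/
theorem admissible_of_no_equivariant_map
    (p d : ℕ) [NeZero p] (hp : p.Prime) (hodd : Odd p) (hd : 1 ≤ d)
    (hmap : ¬ ∃ h : {f : ZMod p → Metric.sphere (0 : EuclideanSpace ℝ (Fin (d + 1))) 1 //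
          ∃ k k', f k ≠ f k'} → (Fin ((p - 1) / 2) → ZMod p → ℝ),
      Continuous h ∧
      (∀ x, (∀ i : Fin ((p - 1) / 2), ∑ k : ZMod p, h x i k = 0) ∧
        ∑ i : Fin ((p - 1) / 2), ∑ k : ZMod p, (h x i k) ^ 2 = 1) ∧
      (∀ x, h (deletedProductShift x) = fun i k => h x i (k + 1)))
    (f : Metric.sphere (0 : EuclideanSpace ℝ (Fin (d + 1))) 1 → EuclideanSpace ℝ (Fin (d + 1)))
    (hf : Continuous f) (hfinj : Function.Injective f)
    (ρ : ℕ → EuclideanSpace ℝ (Fin (d + 1)) → EuclideanSpace ℝ (Fin (d + 1)) → ℝ)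
    (hρ : ∀ j, 1 ≤ j → j ≤ (p - 1) / 2 → IsMetricEquivToStd (ρ j)) :
    ∃ x : ZMod p → Metric.sphere (0 : EuclideanSpace ℝ (Fin (d + 1))) 1,
      Function.Injective x ∧
      ∀ j : ℕ, 1 ≤ j → j ≤ (p - 1) / 2 →
        ∀ k : ZMod p,
          ρ j (f (x (k * (j : ZMod p)))) (f (x ((k + 1) * (j : ZMod p)))) =
            ρ j (f (x 0)) (f (x (j : ZMod p))) := by
  obtain ⟨t, ht⟩ := hodd
  have hpR : (p : ℝ) ≠ 0 := Nat.cast_ne_zero.mpr (NeZero.ne p)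
  let X := {g : ZMod p → Metric.sphere (0 : EuclideanSpace ℝ (Fin (d + 1))) 1 //
    ∃ k k', g k ≠ g k'}
  let G : X → ℕ → ZMod p → ℝ := fun x j k =>
    ρ j (f (x.1 k)) (f (x.1 (k + (j : ZMod p))))
  let P : X → ℕ → ZMod p → ℝ := fun x j k => G x j k - (∑ m : ZMod p, G x j m) / p
  have Gdef : ∀ (x : X) (j : ℕ) (k : ZMod p),
      G x j k = ρ j (f (x.1 k)) (f (x.1 (k + (j : ZMod p)))) := fun _ _ _ => rfl
  have Pdef : ∀ (x : X) (j : ℕ) (k : ZMod p),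
      P x j k = G x j k - (∑ m : ZMod p, G x j m) / p := fun _ _ _ => rfl
  have hsumP : ∀ (x : X) (j : ℕ), ∑ k : ZMod p, P x j k = 0 := by
    intro x j
    simp only [Pdef, Finset.sum_sub_distrib, Finset.sum_const, Finset.card_univ, ZMod.card,
      nsmul_eq_mul]
    field_simp
    ring
  by_cases hable : ∃ x : X, ∀ (i : Fin ((p - 1) / 2)) (k : ZMod p), P x (i.1 + 1) k = 0
  · obtain ⟨x, hPx⟩ := hable
    have key : ∀ j : ℕ, 1 ≤ j → j ≤ (p - 1) / 2 → ∀ k : ZMod p, P x j k = 0 := by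
      intro j h1 h2 k
      have := hPx ⟨j - 1, by omega⟩ k
      simpa [Nat.sub_add_cancel h1] using this
    have hconst : ∀ j : ℕ, 1 ≤ j → j ≤ (p - 1) / 2 → ∀ k : ZMod p, G x j k = G x j 0 := by
      intro j h1 h2 k
      have e1 := key j h1 h2 k
      have e2 := key j h1 h2 0
      rw [Pdef] at e1 e2
      linarith
    have hne : ∀ j : ℕ, 1 ≤ j → j ≤ (p - 1) / 2 →
        ρ j (f (x.1 0)) (f (x.1 (j : ZMod p))) ≠ 0 := by
      intro j h1 h2 hc
      have hjp : (j : ZMod p) ≠ 0 := by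
        intro hz
        have hdvd := (ZMod.natCast_eq_zero_iff j p).1 hz
        have := Nat.le_of_dvd (by omega) hdvd
        omega
      have hstep : ∀ k : ZMod p, x.1 k = x.1 (k + (j : ZMod p)) := by
        intro k
        have hG := hconst j h1 h2 k
        rw [Gdef, Gdef, zero_add, hc] at hG
        exact hfinj (((hρ j h1 h2).2.1 _ _).1 hG)
      have hiter : ∀ (n : ℕ) (k : ZMod p), x.1 k = x.1 (k + (n : ZMod p) * (j : ZMod p)) := by
        intro n
        induction n with
        | zero => intro k; simp
        | succ n ih =>
          intro k
          calc x.1 k = x.1 (k + (n : ZMod p) * (j : ZMod p)) := ih k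
            _ = x.1 (k + (n : ZMod p) * (j : ZMod p) + (j : ZMod p)) := hstep _
            _ = x.1 (k + ((n + 1 : ℕ) : ZMod p) * (j : ZMod p)) := by
                rw [show k + (n : ZMod p) * (j : ZMod p) + (j : ZMod p)
                  = k + ((n + 1 : ℕ) : ZMod p) * (j : ZMod p) by push_cast; ring]
      obtain ⟨k, k', hkk'⟩ := x.2
      apply hkk'
      haveI := Fact.mk hp
      set c := (k' - k) * (j : ZMod p)⁻¹ with hcdef
      have hk' : k + (c.val : ZMod p) * (j : ZMod p) = k' := by
        rw [ZMod.natCast_rightInverse c, hcdef, mul_assoc,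
          inv_mul_cancel₀ hjp, mul_one, add_sub_cancel]
      rw [← hk']
      exact hiter c.val k
    have hinj : Function.Injective x.1 := by
      intro a b hab
      by_contra hne'
      have hm : b - a ≠ 0 := sub_ne_zero.mpr (Ne.symm hne')
      set m := b - a with hmdef
      have hmv1 : 1 ≤ m.val := Nat.one_le_iff_ne_zero.mpr
        (fun h0 => hm ((ZMod.val_eq_zero m).1 h0))
      have hmvp : m.val < p := ZMod.val_lt m
      rcases le_or_gt m.val ((p - 1) / 2) with hle | hgt
      · have hb : b = a + ((m.val : ℕ) : ZMod p) := by
          rw [ZMod.natCast_rightInverse m, hmdef]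
          ring
        have heq := hconst m.val hmv1 hle a
        rw [Gdef, Gdef, zero_add, ← hb, ← hab,
          ((hρ m.val hmv1 hle).2.1 _ _).2 rfl] at heq
        exact hne m.val hmv1 hle heq.symm
      · have hj1 : 1 ≤ p - m.val := by omega
        have hjle : p - m.val ≤ (p - 1) / 2 := by omega
        have hcast : ((p - m.val : ℕ) : ZMod p) = -m := by
          rw [Nat.cast_sub hmvp.le, ZMod.natCast_self, ZMod.natCast_rightInverse m, zero_sub]
        have ha : a = b + ((p - m.val : ℕ) : ZMod p) := by
          rw [hcast, hmdef]
          ring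
        have heq := hconst (p - m.val) hj1 hjle b
        rw [Gdef, Gdef, zero_add, ← ha, hab,
          ((hρ (p - m.val) hj1 hjle).2.1 _ _).2 rfl] at heq
        exact hne (p - m.val) hj1 hjle heq.symm
    refine ⟨x.1, hinj, ?_⟩
    intro j h1 h2 k
    have hG := hconst j h1 h2 (k * (j : ZMod p))
    rw [Gdef, Gdef, zero_add] at hG
    rw [show (k + 1) * (j : ZMod p) = k * (j : ZMod p) + (j : ZMod p) by ring]
    exact hG
  · exfalso
    apply hmap
    push_neg at hable
    let N : X → ℝ := fun x => ∑ i : Fin ((p - 1) / 2), ∑ k : ZMod p, (P x (i.1 + 1) k) ^ 2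
    have Ndef : ∀ x : X, N x = ∑ i : Fin ((p - 1) / 2), ∑ k : ZMod p, (P x (i.1 + 1) k) ^ 2 :=
      fun _ => rfl
    have hNpos : ∀ x : X, 0 < N x := by
      intro x
      obtain ⟨i, k, hik⟩ := hable x
      have h1 : 0 < ∑ k' : ZMod p, (P x (i.1 + 1) k') ^ 2 :=
        Finset.sum_pos' (fun _ _ => sq_nonneg _)
          ⟨k, Finset.mem_univ k, (sq_nonneg _).lt_of_ne (Ne.symm (pow_ne_zero 2 hik))⟩
      exact Finset.sum_pos' (fun i' _ => Finset.sum_nonneg fun _ _ => sq_nonneg _)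
        ⟨i, Finset.mem_univ i, h1⟩
    have hcoord : ∀ k : ZMod p, Continuous fun x : X => f (x.1 k) :=
      fun k => hf.comp ((continuous_apply k).comp continuous_subtype_val)
    have hGc : ∀ (i : Fin ((p - 1) / 2)) (k : ZMod p),
        Continuous fun x : X => G x (i.1 + 1) k := by
      intro i k
      have hρc := metric_continuous' (hρ (i.1 + 1) (by omega) (by have := i.isLt; omega))
      exact hρc.comp ((hcoord k).prodMk (hcoord (k + ((i.1 + 1 : ℕ) : ZMod p))))
    have hPc : ∀ (i : Fin ((p - 1) / 2)) (k : ZMod p),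
        Continuous fun x : X => P x (i.1 + 1) k := by
      intro i k
      exact (hGc i k).sub ((continuous_finset_sum _ fun m _ => hGc i m).div_const p)
    have hNc : Continuous N :=
      continuous_finset_sum _ fun i _ => continuous_finset_sum _ fun k _ => (hPc i k).pow 2
    have hGs : ∀ (x : X) (j : ℕ) (k : ZMod p),
        G (deletedProductShift x) j k = G x j (k + 1) := by
      intro x j k
      show ρ j (f (x.1 (k + 1))) (f (x.1 (k + (j : ZMod p) + 1)))
        = ρ j (f (x.1 (k + 1))) (f (x.1 (k + 1 + (j : ZMod p))))
      rw [add_right_comm]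
    have hGsum : ∀ (x : X) (j : ℕ),
        ∑ m : ZMod p, G (deletedProductShift x) j m = ∑ m : ZMod p, G x j m := by
      intro x j
      simp only [hGs]
      simpa using Equiv.sum_comp (Equiv.addRight (1 : ZMod p)) (G x j)
    have hPs : ∀ (x : X) (j : ℕ) (k : ZMod p),
        P (deletedProductShift x) j k = P x j (k + 1) := by
      intro x j k
      rw [Pdef, Pdef, hGs, hGsum]
    have hNs : ∀ x : X, N (deletedProductShift x) = N x := by
      intro x
      rw [Ndef, Ndef]
      refine Finset.sum_congr rfl fun i _ => ?_
      simp only [hPs]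
      simpa using Equiv.sum_comp (Equiv.addRight (1 : ZMod p))
        (fun k => (P x (i.1 + 1) k) ^ 2)
    refine ⟨fun x i k => P x (i.1 + 1) k / Real.sqrt (N x), ?_, ?_, ?_⟩
    · refine continuous_pi fun i => continuous_pi fun k => ?_
      exact (hPc i k).div (Real.continuous_sqrt.comp hNc)
        (fun x => ne_of_gt (Real.sqrt_pos.2 (hNpos x)))
    · intro x
      constructor
      · intro i
        rw [← Finset.sum_div, hsumP x (i.1 + 1), zero_div]
      · have hN := hNpos x
        have hrw : ∀ i : Fin ((p - 1) / 2),
            ∑ k : ZMod p, (P x (i.1 + 1) k / Real.sqrt (N x)) ^ 2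
            = (∑ k : ZMod p, (P x (i.1 + 1) k) ^ 2) / N x := by
          intro i
          simp only [div_pow, Real.sq_sqrt hN.le, ← Finset.sum_div]
        simp only [hrw, ← Finset.sum_div, ← Ndef]
        exact div_self (ne_of_gt hN)
    · intro x
      funext i k
      simp only [hPs, hNs]
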